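/- arXiv:math/9807091 — 4 statements merged into one kernel-verified Lean document; each statement's English description precedes it below -/
import Mathlib

section
/- Let A be a C*-algebra and u = (a_{ij}) a 3×3 magic unitary over A. Then all the entries a_{ij} commute with one another; consequently the universal C*-algebra generated by a 3×3 magic unitary is commutative. -/
/-!
Entries in a common row or column are orthogonal projections, so they commute trivially.
For `a i j` and `a k l` in different rows and columns, let `m` and `n` be the remaining row
and column. Expanding `a k l = 1 - a k j - a k n` and then `a k n = 1 - a i n - a m n`
gives `a i j * a k l = a i j * a m n`: multiplying `a i j` from the left by one entry of the
"transversal" `(i, j), (k, l), (m, n)` is the same as by the other. Together with its adjoint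
this lets one move around the transversal until `a i j * a k l` becomes `a k l * a i j`.
-/

open Finset

lemma Fin.sum_univ_three_of_ne {M : Type*} [AddCommMonoid M] (f : Fin 3 → M) {i j k : Fin 3}
    (hij : i ≠ j) (hik : i ≠ k) (hjk : j ≠ k) : ∑ x, f x = f i + f j + f k := by
  have huniv : ({i, j, k} : Finset (Fin 3)) = univ := by
    revert i j k
    decide
  rw [← huniv, sum_insert (by simp [hij, hik]), sum_pair hjk, add_assoc]

lemma Fin.exists_ne_and_ne_of_ne {i j : Fin 3} (hij : i ≠ j) : ∃ k, i ≠ k ∧ j ≠ k := by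
  revert i j
  decide

namespace IsStarProjection

variable {A : Type*} [CStarAlgebra A]

lemma mul_eq_zero_of_add_le_one [PartialOrder A] [StarOrderedRing A] {p q : A}
    (hp : IsStarProjection p) (hq : IsStarProjection q) (hpq : p + q ≤ 1) : p * q = 0 := by
  have hle : p ≤ 1 - q := le_sub_iff_add_le.mpr hpq
  have hmul : p * (1 - q) = p := (hp.le_iff_mul_eq_left hq.one_sub).mp hle
  rwa [mul_sub, mul_one, sub_eq_self] at hmul

lemma mul_eq_zero_of_sum_eq_one {ι : Type*} [Fintype ι] {p : ι → A}
    (hp : ∀ i, IsStarProjection (p i)) (hsum : ∑ i, p i = 1) {i j : ι} (hij : i ≠ j) :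
    p i * p j = 0 := by
  let _ := CStarAlgebra.spectralOrder A
  have _ := CStarAlgebra.spectralOrderedRing A
  classical
  refine (hp i).mul_eq_zero_of_add_le_one (hp j) ?_
  calc p i + p j = ∑ x ∈ {i, j}, p x := (sum_pair hij).symm
    _ ≤ ∑ x, p x := sum_le_sum_of_subset_of_nonneg (subset_univ _) fun x _ _ => (hp x).nonneg
    _ = 1 := hsum

end IsStarProjection

structure Matrix.IsMagicUnitary {ι A : Type*} [Fintype ι] [Semiring A] [Star A]
    (u : Matrix ι ι A) : Prop where
  isStarProjection : ∀ i j, IsStarProjection (u i j)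
  sum_row : ∀ i, ∑ j, u i j = 1
  sum_col : ∀ j, ∑ i, u i j = 1

namespace Matrix.IsMagicUnitary

section General

variable {ι A : Type*} [Fintype ι]

lemma transpose [Semiring A] [Star A] {u : Matrix ι ι A} (hu : u.IsMagicUnitary) :
    uᵀ.IsMagicUnitary :=
  ⟨fun i j => hu.isStarProjection j i, hu.sum_col, hu.sum_row⟩

variable [CStarAlgebra A] {u : Matrix ι ι A}

lemma mul_eq_zero_of_ne_col (hu : u.IsMagicUnitary) (i : ι) {j l : ι} (hjl : j ≠ l) :
    u i j * u i l = 0 :=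
  IsStarProjection.mul_eq_zero_of_sum_eq_one (hu.isStarProjection i) (hu.sum_row i) hjl

lemma mul_eq_zero_of_ne_row (hu : u.IsMagicUnitary) (j : ι) {i k : ι} (hik : i ≠ k) :
    u i j * u k j = 0 :=
  hu.transpose.mul_eq_zero_of_ne_col j hik

end General

variable {A : Type*} [CStarAlgebra A] {u : Matrix (Fin 3) (Fin 3) A}
  {i j k l m n : Fin 3}

lemma mul_eq_mul_left_of_transversal (hu : u.IsMagicUnitary) (hik : i ≠ k) (him : i ≠ m)
    (hkm : k ≠ m) (hjl : j ≠ l) (hjn : j ≠ n) (hln : l ≠ n) :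
    u i j * u k l = u i j * u m n := by
  have hrow : u k l = 1 - u k j - u k n := by
    rw [← hu.sum_row k, Fin.sum_univ_three_of_ne _ hjl hjn hln]
    abel
  have hcol : u k n = 1 - u i n - u m n := by
    rw [← hu.sum_col n, Fin.sum_univ_three_of_ne (fun x => u x n) hik him hkm]
    abel
  calc u i j * u k l = u i j - u i j * u k n := by
        rw [hrow, mul_sub, mul_sub, mul_one, hu.mul_eq_zero_of_ne_row j hik, sub_zero]
    _ = u i j * u m n := by
        rw [hcol, mul_sub, mul_sub, mul_one, hu.mul_eq_zero_of_ne_col i hjn, sub_zero,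
          sub_sub_cancel]

lemma mul_eq_mul_right_of_transversal (hu : u.IsMagicUnitary) (hik : i ≠ k) (him : i ≠ m)
    (hkm : k ≠ m) (hjl : j ≠ l) (hjn : j ≠ n) (hln : l ≠ n) :
    u k l * u i j = u m n * u i j := by
  have h := congrArg star (hu.mul_eq_mul_left_of_transversal hik him hkm hjl hjn hln)
  simpa only [star_mul, (hu.isStarProjection _ _).isSelfAdjoint.star_eq] using h

lemma commute (hu : u.IsMagicUnitary) (i j k l : Fin 3) : Commute (u i j) (u k l) := by
  rcases eq_or_ne i k with rfl | hik
  · rcases eq_or_ne j l with rfl | hjl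
    · exact Commute.refl _
    · exact (hu.mul_eq_zero_of_ne_col i hjl).trans (hu.mul_eq_zero_of_ne_col i hjl.symm).symm
  rcases eq_or_ne j l with rfl | hjl
  · exact (hu.mul_eq_zero_of_ne_row j hik).trans (hu.mul_eq_zero_of_ne_row j hik.symm).symm
  obtain ⟨m, him, hkm⟩ := Fin.exists_ne_and_ne_of_ne hik
  obtain ⟨n, hjn, hln⟩ := Fin.exists_ne_and_ne_of_ne hjl
  calc u i j * u k l = u m n * u k l :=
        hu.mul_eq_mul_right_of_transversal hik.symm hkm him hjl.symm hln hjn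
    _ = u m n * u i j :=
        hu.mul_eq_mul_left_of_transversal hkm.symm him.symm hik.symm hln.symm hjn.symm hjl.symm
    _ = u k l * u i j := (hu.mul_eq_mul_right_of_transversal hik him hkm hjl hjn hln).symm

end Matrix.IsMagicUnitary

/-- All entries of a `3 × 3` magic unitary over a unital C*-algebra commute
with one another. -/
theorem magic_unitary_three_by_three_commutative
    {A : Type*} [NormedRing A] [StarRing A] [CStarRing A] [CompleteSpace A]
    [NormedAlgebra ℂ A] [StarModule ℂ A]
    (a : Fin 3 → Fin 3 → A)
    (hidem : ∀ i j, a i j * a i j = a i j)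
    (hsa : ∀ i j, star (a i j) = a i j)
    (hrow : ∀ i, ∑ j, a i j = 1)
    (hcol : ∀ j, ∑ i, a i j = 1) :
    ∀ i j k l, Commute (a i j) (a k l) := by
  let _ : CStarAlgebra A := {}
  have hu : Matrix.IsMagicUnitary (A := A) a :=
    ⟨fun i j => ⟨hidem i j, hsa i j⟩, hrow, hcol⟩
  exact hu.commute
end

section
/- Let A be a *-algebra with elements a^{kl}_{ij} (i,j,k,l = 1,...,n) satisfying: (i) Σ_v a^{kv}_{ij} a^{vl}_{rs} = δ_{jr} a^{kl}_{is}; (ii) (a^{kl}_{ij})* = a^{lk}_{ji}; (iii) Σ_r a^{kl}_{rr} = δ_{kl}; (iv) Σ_r a^{rr}_{kl} = δ_{kl}. Then the n²×n² matrix u with entries u_{(kl),(ij)} = a^{kl}_{ij} satisfies u* u = I, i.e., Σ_{k,l} (a^{kl}_{ij})* a^{kl}_{rs} = δ_{ir} δ_{js} · 1. -/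
/-! By the star relation the left-hand side is `∑ l, ∑ k, a^{lk}_{ji} a^{kl}_{rs}`. The
multiplication relation collapses the inner sum to `δ_{ir} a^{ll}_{js}`, and the trace relation
`∑ l, a^{ll}_{js} = δ_{js}` finishes. -/

open Finset

theorem sum_sum_mul_swap_eq_ite {A ι : Type*} [Semiring A] [Fintype ι] [DecidableEq ι]
    (a : ι → ι → ι → ι → A)
    (hmul : ∀ i j k l r s, ∑ v, a k v i j * a v l r s = if j = r then a k l i s else 0)
    (htrace : ∀ k l, ∑ r, a r r k l = if k = l then 1 else 0) (i j r s : ι) :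
    ∑ l, ∑ k, a l k j i * a k l r s = if i = r ∧ j = s then 1 else 0 := by
  simp only [hmul j i _ _ r s]
  by_cases hir : i = r
  · simp [hir, htrace]
  · simp [hir]

theorem Mn_relations_imply_left_unitary_general
    {A : Type*} [Ring A] [StarRing A]
    {n : ℕ} (a : Fin n → Fin n → Fin n → Fin n → A)
    (h1 : ∀ i j k l r s, ∑ v, a k v i j * a v l r s =
      if j = r then a k l i s else 0)
    (h2 : ∀ i j k l, star (a k l i j) = a l k j i)
    (h4 : ∀ k l, ∑ r, a r r k l = if k = l then 1 else 0) :
    ∀ i j r s, ∑ k, ∑ l, star (a k l i j) * a k l r s =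
      if i = r ∧ j = s then 1 else 0 := by
  intro i j r s
  simp only [h2]
  rw [sum_comm]
  exact sum_sum_mul_swap_eq_ite a h1 h4 i j r s

/-- The defining relations of the quantum automorphism group of `Mₙ` imply
left-unitarity of the matrix of generators:
`∑ k l, star (a k l i j) * a k l r s = δ_{ir} δ_{js}`. Here `a k l i j`
denotes `a^{kl}_{ij}`. -/
theorem Mn_relations_imply_left_unitary
    {A : Type*} [Ring A] [StarRing A]
    {n : ℕ} (a : Fin n → Fin n → Fin n → Fin n → A)
    (h1 : ∀ i j k l r s, ∑ v, a k v i j * a v l r s =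
      if j = r then a k l i s else 0)
    (h2 : ∀ i j k l, star (a k l i j) = a l k j i)
    (h3 : ∀ k l, ∑ r, a k l r r = if k = l then 1 else 0)
    (h4 : ∀ k l, ∑ r, a r r k l = if k = l then 1 else 0) :
    ∀ i j r s, ∑ k, ∑ l, star (a k l i j) * a k l r s =
      if i = r ∧ j = s then 1 else 0 :=
  Mn_relations_imply_left_unitary_general a h1 h2 h4
end

section
/- Let A be a *-algebra and (a_{ij}) an n×n matrix over A such that both u = (a_{ij}) and ū = (a_{ij}*) are unitary in M_n(A). Define b^{kl}_{ij} = a_{ki} a_{lj}* for i,j,k,l = 1,...,n. Then the b^{kl}_{ij} satisfy the quantum automorphism group relations for M_n: (i) Σ_v b^{kv}_{ij} b^{vl}_{rs} = δ_{jr} b^{kl}_{is}; (ii) (b^{kl}_{ij})* = b^{lk}_{ji}; (iii) Σ_r b^{kl}_{rr} = δ_{kl}; (iv) Σ_r b^{rr}_{kl} = δ_{kl}. -/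
theorem Finset.sum_mul_mul_eq_mul_sum_mul {ι R : Type*} [NonUnitalSemiring R] (s : Finset ι)
    (x y : R) (f g : ι → R) :
    ∑ v ∈ s, x * f v * (g v * y) = x * (∑ v ∈ s, f v * g v) * y := by
  rw [Finset.mul_sum, Finset.sum_mul]
  simp only [mul_assoc]

theorem Au_maps_to_Aaut_Mn_general
    {A : Type*} [Ring A] [StarRing A]
    {n : ℕ} (a : Fin n → Fin n → A)
    (hu1 : ∀ i j, ∑ k, a i k * star (a j k) = if i = j then 1 else 0)
    (hu2 : ∀ i j, ∑ k, star (a k i) * a k j = if i = j then 1 else 0)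
    (hu4 : ∀ i j, ∑ k, a k i * star (a k j) = if i = j then 1 else 0)
    (b : Fin n → Fin n → Fin n → Fin n → A)
    (hb : ∀ i j k l, b k l i j = a k i * star (a l j)) :
    (∀ i j k l r s, ∑ v, b k v i j * b v l r s =
      if j = r then b k l i s else 0) ∧
    (∀ i j k l, star (b k l i j) = b l k j i) ∧
    (∀ k l, ∑ r, b k l r r = if k = l then 1 else 0) ∧
    (∀ k l, ∑ r, b r r k l = if k = l then 1 else 0) := by
  refine ⟨fun i j k l r s => ?_, fun i j k l => ?_, ?_, ?_⟩
  · simp only [hb, Finset.sum_mul_mul_eq_mul_sum_mul, hu2]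
    split_ifs <;> simp
  · simp only [hb, star_mul, star_star]
  · simp only [hb, hu1, implies_true]
  · simp only [hb, hu4, implies_true]

/-- If both `u = (a_{ij})` and its entrywise conjugate are unitary matrices over
a unital *-algebra `A`, then `b^{kl}_{ij} = a_{ki} * star (a_{lj})` satisfies
the defining relations of the quantum automorphism group of `Mₙ`. -/
theorem Au_maps_to_Aaut_Mn
    {A : Type*} [Ring A] [StarRing A]
    {n : ℕ} (a : Fin n → Fin n → A)
    (hu1 : ∀ i j, ∑ k, a i k * star (a j k) = if i = j then 1 else 0)
    (hu2 : ∀ i j, ∑ k, star (a k i) * a k j = if i = j then 1 else 0)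
    (hu3 : ∀ i j, ∑ k, star (a i k) * a j k = if i = j then 1 else 0)
    (hu4 : ∀ i j, ∑ k, a k i * star (a k j) = if i = j then 1 else 0)
    (b : Fin n → Fin n → Fin n → Fin n → A)
    (hb : ∀ i j k l, b k l i j = a k i * star (a l j)) :
    (∀ i j k l r s, ∑ v, b k v i j * b v l r s =
      if j = r then b k l i s else 0) ∧
    (∀ i j k l, star (b k l i j) = b l k j i) ∧
    (∀ k l, ∑ r, b k l r r = if k = l then 1 else 0) ∧
    (∀ k l, ∑ r, b r r k l = if k = l then 1 else 0) :=
  Au_maps_to_Aaut_Mn_general a hu1 hu2 hu4 b hb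
end

section
/- Let A be a *-algebra and let u = (a^{kl}_{ij}) be an n²×n² matrix over A indexed by pairs, and Q = (q^{kl}_{ij}) an invertible matrix in M_n(ℂ) ⊗ M_n(ℂ) with inverse Q̃ = (q̃^{kl}_{ij}). Define P and P̃ by p^{kl}_{ij} = q^{lk}_{ij} and p̃^{kl}_{ij} = q̃^{kl}_{ji}. Suppose u satisfies (a^{kl}_{ij})* = a^{lk}_{ji} and u* Q u Q^{-1} = I = Q u Q^{-1} u*. Then P̃ = P^{-1} and u^t P u P^{-1} = I = P u P^{-1} u^t; in particular u^t is invertible in M_{n²}(A). -/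
/-!
Write `σ` for the swap `(k, l) ↦ (l, k)` of index pairs. Then `P` is `Q` with its rows permuted
by `σ`, `P̃` is `Q̃` with its columns permuted by `σ`, and the hypothesis on `u*` says exactly
that `uᵀ` is `u*` with rows and columns permuted by `σ`. Each of the relations to be proved is
therefore one of the given relations with rows and columns permuted by `σ`, and permuting the
identity matrix this way leaves it unchanged.
-/

open Matrix

namespace Matrix

theorem transpose_eq_conjTranspose_submatrix_prodComm {m A : Type*} [Star A]
    {u : Matrix (m × m) (m × m) A} (h : ∀ k l i j, star (u (k, l) (i, j)) = u (l, k) (j, i)) :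
    uᵀ = uᴴ.submatrix (Equiv.prodComm m m) (Equiv.prodComm m m) := by
  ext ⟨k, l⟩ ⟨i, j⟩
  simp [h]

variable {m R : Type*} [Fintype m] [NonUnitalNonAssocSemiring R] (e : m ≃ m)
  (V X U Y : Matrix m m R)

theorem submatrix_mul_submatrix_mul_mul_submatrix :
    V.submatrix e e * X.submatrix e id * U * Y.submatrix id e =
      (V * X * U * Y).submatrix e e := by
  rw [submatrix_mul _ _ _ id _ Function.bijective_id,
    submatrix_mul _ _ _ id id Function.bijective_id, submatrix_id_id,
    submatrix_mul _ _ _ e _ e.bijective]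

theorem submatrix_mul_mul_submatrix_mul_submatrix :
    X.submatrix e id * U * Y.submatrix id e * V.submatrix e e =
      (X * U * Y * V).submatrix e e := by
  rw [submatrix_mul _ _ _ e _ e.bijective,
    submatrix_mul _ _ _ id _ Function.bijective_id,
    submatrix_mul _ _ _ id id Function.bijective_id, submatrix_id_id]

end Matrix

/-- If a matrix `u = (a^{kl}_{ij})` over a *-algebra, indexed by pairs,
satisfies `(a^{kl}_{ij})* = a^{lk}_{ji}` and `u* Q u Q⁻¹ = 1 = Q u Q⁻¹ u*`
for an invertible scalar matrix `Q` with inverse `Q̃`, then for the matrices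
`P`, `P̃` defined by `p^{kl}_{ij} = q^{lk}_{ij}` and `p̃^{kl}_{ij} = q̃^{kl}_{ji}`
one has `P̃ = P⁻¹` and `uᵀ P u P⁻¹ = 1 = P u P⁻¹ uᵀ`; in particular `uᵀ` is
invertible. -/
theorem conjugate_relations_give_transpose_invertible
    {A : Type*} [Ring A] [StarRing A] [Algebra ℂ A]
    {n : ℕ} (u : Matrix (Fin n × Fin n) (Fin n × Fin n) A)
    (Q Qt : Matrix (Fin n × Fin n) (Fin n × Fin n) ℂ)
    (hQ : Q * Qt = 1 ∧ Qt * Q = 1)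
    (hstar : ∀ k l i j, star (u (k, l) (i, j)) = u (l, k) (j, i))
    (hrel : uᴴ * (Q.map (algebraMap ℂ A)) * u * (Qt.map (algebraMap ℂ A)) = 1 ∧
      (Q.map (algebraMap ℂ A)) * u * (Qt.map (algebraMap ℂ A)) * uᴴ = 1)
    (P Pt : Matrix (Fin n × Fin n) (Fin n × Fin n) ℂ)
    (hP : ∀ k l i j, P (k, l) (i, j) = Q (l, k) (i, j))
    (hPt : ∀ k l i j, Pt (k, l) (i, j) = Qt (k, l) (j, i)) :
    (P * Pt = 1 ∧ Pt * P = 1) ∧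
    (uᵀ * (P.map (algebraMap ℂ A)) * u * (Pt.map (algebraMap ℂ A)) = 1 ∧
      (P.map (algebraMap ℂ A)) * u * (Pt.map (algebraMap ℂ A)) * uᵀ = 1) ∧
    IsUnit uᵀ := by
  set σ := Equiv.prodComm (Fin n) (Fin n)
  have hP_eq : P = Q.submatrix σ id := by ext ⟨k, l⟩ ⟨i, j⟩; exact hP k l i j
  have hPt_eq : Pt = Qt.submatrix id σ := by ext ⟨k, l⟩ ⟨i, j⟩; exact hPt k l i j
  have huT : uᵀ = uᴴ.submatrix σ σ := transpose_eq_conjTranspose_submatrix_prodComm hstar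
  subst hP_eq hPt_eq
  have hleft : uᵀ * (Q.submatrix σ id).map (algebraMap ℂ A) * u *
      (Qt.submatrix id σ).map (algebraMap ℂ A) = 1 := by
    rw [huT, ← submatrix_map, ← submatrix_map, submatrix_mul_submatrix_mul_mul_submatrix,
      hrel.1, submatrix_one_equiv]
  have hright : (Q.submatrix σ id).map (algebraMap ℂ A) * u *
      (Qt.submatrix id σ).map (algebraMap ℂ A) * uᵀ = 1 := by
    rw [huT, ← submatrix_map, ← submatrix_map, submatrix_mul_mul_submatrix_mul_submatrix,
      hrel.2, submatrix_one_equiv]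
  refine ⟨⟨?_, ?_⟩, ⟨hleft, hright⟩,
    ⟨⟨uᵀ, _, by simpa only [mul_assoc] using hleft, hright⟩, rfl⟩⟩
  · rw [← submatrix_mul _ _ _ id _ Function.bijective_id, hQ.1, submatrix_one_equiv]
  · rw [submatrix_mul_equiv, submatrix_id_id, hQ.2]
end
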